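/- (Discrete Gagliardo–Nirenberg inequality.) There exists a constant C > 0 such that for every even integer K ≥ 2 and every U ∈ ℂ^{B^K}, (2π/K)·Σ_{k∈B^K}|U_k|⁴ ≤ C·(‖U‖_{h¹} + ‖U‖_{ℓ²})·‖U‖_{ℓ²}³. -/

import Mathlib

/-!
With `g k = |U_k|²`, the oscillation of `g` over a period is bounded by its total variation
`Σ |g (k+1) - g k|`, so `max g ≤ mean g + Σ |Δg|`. Since `|Δ|U|²| ≤ |ΔU| (|U_{k+1}| + |U_k|)`,
Cauchy–Schwarz and periodicity give `Σ |Δg| ≤ 2 (Σ |ΔU|²)^{1/2} (Σ |U|²)^{1/2}`, and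
`Σ |U|⁴ ≤ max g · Σ g`. In the scaled norms this reads
`(2π/K) Σ |U|⁴ ≤ (‖U‖²_{ℓ²}/(2π) + 2 ‖U‖_{h¹} ‖U‖_{ℓ²}) ‖U‖²_{ℓ²}`, whence `C = 2`.
-/

/-- The index set `B^K = {−K/2, …, K/2−1}` (for `K` even). -/
noncomputable def BK (K : ℕ) : Finset ℤ := Finset.Icc (-((K : ℤ) / 2)) ((K : ℤ) / 2 - 1)

/-- The discrete Fourier transform `(F_K U)_j = (1/K) Σ_{k∈B^K} e^{−2πijk/K} U_k`. -/
noncomputable def dft (K : ℕ) (U : ℤ → ℂ) (j : ℤ) : ℂ :=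
  (1 / (K : ℂ)) * ∑ k ∈ BK K,
    Complex.exp (-(2 * (Real.pi : ℂ) * Complex.I * (j : ℂ) * (k : ℂ)) / (K : ℂ)) * U k

/-- The inverse discrete Fourier transform `(F_K⁻¹ W)_k = Σ_{j∈B^K} e^{2πijk/K} W_j`. -/
noncomputable def idft (K : ℕ) (W : ℤ → ℂ) (k : ℤ) : ℂ :=
  ∑ j ∈ BK K,
    Complex.exp ((2 * (Real.pi : ℂ) * Complex.I * (j : ℂ) * (k : ℂ)) / (K : ℂ)) * W j

/-- The discrete `ℓ²` norm: `‖U‖_{ℓ²}² = (2π/K) Σ_{k∈B^K} |U_k|²`. -/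
noncomputable def l2normK (K : ℕ) (U : ℤ → ℂ) : ℝ :=
  Real.sqrt ((2 * Real.pi / K) * ∑ k ∈ BK K, ‖U k‖ ^ 2)

/-- The discrete `h¹` norm: `‖U‖_{h¹}² = (2π/K) Σ_{k∈B^K} |(U_{k+1}−U_k)/δx|²`
with `δx = 2π/K`. -/
noncomputable def h1normK (K : ℕ) (U : ℤ → ℂ) : ℝ :=
  Real.sqrt ((2 * Real.pi / K) *
    ∑ k ∈ BK K, ‖(U (k + 1) - U k) / ((2 * Real.pi / K : ℝ) : ℂ)‖ ^ 2)

/-- The discrete kinetic energy `T^K(W) = (1/K) Σ_{j∈B^K} j²|W_j|²`. -/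
noncomputable def tK (K : ℕ) (W : ℤ → ℂ) : ℝ :=
  (1 / (K : ℝ)) * ∑ j ∈ BK K, (j : ℝ) ^ 2 * ‖W j‖ ^ 2

/-- The discrete free Schrödinger flow `e^{itΔ^K}U = F_K⁻¹(j ↦ e^{−itj²}(F_K U)_j)`. -/
noncomputable def freeFlowK (K : ℕ) (t : ℝ) (U : ℤ → ℂ) : ℤ → ℂ :=
  idft K (fun j => Complex.exp (-(Complex.I * (t : ℂ)) * (j : ℂ) ^ 2) * dft K U j)

open Finset

theorem le_sum_div_card_add {ι : Type*} {s : Finset ι} {g : ι → ℝ} {x T : ℝ}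
    (h : ∀ n ∈ s, x ≤ g n + T) (hs : s.Nonempty) : x ≤ (∑ n ∈ s, g n) / #s + T := by
  have hcard : (0 : ℝ) < #s := by exact_mod_cast hs.card_pos
  have := card_nsmul_le_sum s g (x - T) fun n hn ↦ by linarith [h n hn]
  rw [nsmul_eq_mul] at this
  rw [← sub_le_iff_le_add, le_div_iff₀ hcard]
  linarith

theorem abs_norm_sq_sub_norm_sq_le {E : Type*} [SeminormedAddCommGroup E] (x y : E) :
    |‖x‖ ^ 2 - ‖y‖ ^ 2| ≤ ‖x - y‖ * (‖x‖ + ‖y‖) := by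
  rw [sq_sub_sq, abs_mul, abs_of_nonneg (by positivity : 0 ≤ ‖x‖ + ‖y‖), mul_comm ‖x - y‖]
  exact mul_le_mul_of_nonneg_left (abs_norm_sub_norm_le x y) (by positivity)

namespace Int

variable {M : Type*} [AddCommGroup M]

theorem sum_Ico_sub (g : ℤ → M) {p q : ℤ} (hpq : p ≤ q) :
    ∑ k ∈ Ico p q, (g (k + 1) - g k) = g q - g p := by
  induction q, hpq using Int.leInduction with
  | base => simp
  | succ q hpq ih =>
    rw [← sum_Ico_add_eq_sum_Ico_add_one hpq, ih]
    abel

theorem abs_sub_le_sum_Ico_abs_sub (g : ℤ → ℝ) {a b p q : ℤ} (hp : p ∈ Icc a b)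
    (hq : q ∈ Icc a b) : |g q - g p| ≤ ∑ k ∈ Ico a b, |g (k + 1) - g k| := by
  wlog hpq : p ≤ q generalizing p q
  · rw [abs_sub_comm]
    exact this hq hp (le_of_not_ge hpq)
  rw [mem_Icc] at hp hq
  calc |g q - g p| = |∑ k ∈ Ico p q, (g (k + 1) - g k)| := by rw [sum_Ico_sub g hpq]
    _ ≤ ∑ k ∈ Ico p q, |g (k + 1) - g k| := abs_sum_le_sum_abs _ _
    _ ≤ ∑ k ∈ Ico a b, |g (k + 1) - g k| :=
      sum_le_sum_of_subset_of_nonneg (Ico_subset_Ico hp.1 hq.2) fun _ _ _ ↦ abs_nonneg _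

theorem le_sum_Ico_div_card_add (g : ℤ → ℝ) {a b p : ℤ} (hp : p ∈ Ico a b) :
    g p ≤ (∑ k ∈ Ico a b, g k) / #(Ico a b) + ∑ k ∈ Ico a b, |g (k + 1) - g k| := by
  refine le_sum_div_card_add (fun n hn ↦ ?_) ⟨p, hp⟩
  have := abs_sub_le_sum_Ico_abs_sub g (Ico_subset_Icc_self hn) (Ico_subset_Icc_self hp)
  linarith [le_abs_self (g p - g n)]

end Int

namespace Function.Periodic

variable {K : ℕ}

theorem sum_Ico_comp_add_one {M : Type*} [AddCommGroup M] {f : ℤ → M} (hf : Periodic f K)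
    (a : ℤ) :
    ∑ k ∈ Ico a (a + K), f (k + 1) = ∑ k ∈ Ico a (a + K), f k := by
  rw [← sub_eq_zero, ← sum_sub_distrib, Int.sum_Ico_sub f (by omega), hf, sub_self]

variable {E : Type*} [SeminormedAddCommGroup E] {f : ℤ → E}

theorem sum_abs_norm_sq_sub_le (hf : Periodic f K) (a : ℤ) :
    ∑ k ∈ Ico a (a + K), |‖f (k + 1)‖ ^ 2 - ‖f k‖ ^ 2| ≤
      2 * √(∑ k ∈ Ico a (a + K), ‖f (k + 1) - f k‖ ^ 2) * √(∑ k ∈ Ico a (a + K), ‖f k‖ ^ 2) := by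
  set S := ∑ k ∈ Ico a (a + K), ‖f k‖ ^ 2
  have hshift : ∑ k ∈ Ico a (a + K), ‖f (k + 1)‖ ^ 2 = S :=
    (hf.comp fun x ↦ ‖x‖ ^ 2).sum_Ico_comp_add_one a
  have hsq : ∑ k ∈ Ico a (a + K), (‖f (k + 1)‖ + ‖f k‖) ^ 2 ≤ 2 ^ 2 * S :=
    calc ∑ k ∈ Ico a (a + K), (‖f (k + 1)‖ + ‖f k‖) ^ 2
        ≤ ∑ k ∈ Ico a (a + K), 2 * (‖f (k + 1)‖ ^ 2 + ‖f k‖ ^ 2) := sum_le_sum fun _ _ ↦ add_sq_le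
      _ = 2 ^ 2 * S := by rw [← mul_sum, sum_add_distrib, hshift]; ring
  calc ∑ k ∈ Ico a (a + K), |‖f (k + 1)‖ ^ 2 - ‖f k‖ ^ 2|
      ≤ ∑ k ∈ Ico a (a + K), ‖f (k + 1) - f k‖ * (‖f (k + 1)‖ + ‖f k‖) :=
        sum_le_sum fun _ _ ↦ abs_norm_sq_sub_norm_sq_le _ _
    _ ≤ √(∑ k ∈ Ico a (a + K), ‖f (k + 1) - f k‖ ^ 2) *
          √(∑ k ∈ Ico a (a + K), (‖f (k + 1)‖ + ‖f k‖) ^ 2) :=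
        Real.sum_mul_le_sqrt_mul_sqrt _ _ _
    _ ≤ √(∑ k ∈ Ico a (a + K), ‖f (k + 1) - f k‖ ^ 2) * √(2 ^ 2 * S) := by gcongr
    _ = 2 * √(∑ k ∈ Ico a (a + K), ‖f (k + 1) - f k‖ ^ 2) * √S := by
        rw [Real.sqrt_mul (by positivity), Real.sqrt_sq zero_le_two]; ring

theorem sum_norm_pow_four_le (hf : Periodic f K) (a : ℤ) :
    ∑ k ∈ Ico a (a + K), ‖f k‖ ^ 4 ≤
      ((∑ k ∈ Ico a (a + K), ‖f k‖ ^ 2) / K +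
          2 * √(∑ k ∈ Ico a (a + K), ‖f (k + 1) - f k‖ ^ 2) * √(∑ k ∈ Ico a (a + K), ‖f k‖ ^ 2)) *
        ∑ k ∈ Ico a (a + K), ‖f k‖ ^ 2 := by
  set M := (∑ k ∈ Ico a (a + K), ‖f k‖ ^ 2) / K +
    2 * √(∑ k ∈ Ico a (a + K), ‖f (k + 1) - f k‖ ^ 2) * √(∑ k ∈ Ico a (a + K), ‖f k‖ ^ 2)
  have hcard : (#(Ico a (a + K)) : ℝ) = K := by simp
  have hmax : ∀ p ∈ Ico a (a + K), ‖f p‖ ^ 2 ≤ M := fun p hp ↦ by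
    have := Int.le_sum_Ico_div_card_add (fun k ↦ ‖f k‖ ^ 2) hp
    rw [hcard] at this
    linarith [hf.sum_abs_norm_sq_sub_le a]
  calc ∑ k ∈ Ico a (a + K), ‖f k‖ ^ 4 = ∑ k ∈ Ico a (a + K), ‖f k‖ ^ 2 * ‖f k‖ ^ 2 :=
        sum_congr rfl fun _ _ ↦ by ring
    _ ≤ ∑ k ∈ Ico a (a + K), M * ‖f k‖ ^ 2 :=
        sum_le_sum fun k hk ↦ mul_le_mul_of_nonneg_right (hmax k hk) (by positivity)
    _ = M * ∑ k ∈ Ico a (a + K), ‖f k‖ ^ 2 := (mul_sum _ _ _).symm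

end Function.Periodic

theorem BK_eq_Ico {K : ℕ} (hK : Even K) : BK K = Ico (-((K : ℤ) / 2)) (-((K : ℤ) / 2) + K) := by
  obtain ⟨m, rfl⟩ := hK
  ext k
  simp only [BK, mem_Icc, mem_Ico]
  omega

theorem l2normK_sq (K : ℕ) (U : ℤ → ℂ) :
    l2normK K U ^ 2 = 2 * Real.pi / K * ∑ k ∈ BK K, ‖U k‖ ^ 2 :=
  Real.sq_sqrt (by positivity)

theorem h1normK_mul_l2normK {K : ℕ} (hK : K ≠ 0) (U : ℤ → ℂ) :
    h1normK K U * l2normK K U = √(∑ k ∈ BK K, ‖U (k + 1) - U k‖ ^ 2) * √(∑ k ∈ BK K, ‖U k‖ ^ 2) := by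
  have hδ : 0 < 2 * Real.pi / K := by positivity
  simp only [h1normK, l2normK, norm_div, Complex.norm_real, Real.norm_of_nonneg hδ.le, div_pow,
    ← sum_div]
  rw [← Real.sqrt_mul (by positivity), ← Real.sqrt_mul (by positivity)]
  congr 1
  field_simp

/-- **discrete Gagliardo–Nirenberg inequality.** There is a constant `C > 0`
such that for every even `K ≥ 2` and every (periodically indexed) `U ∈ ℂ^{B^K}`,
`(2π/K)·Σ_{k∈B^K} |U_k|⁴ ≤ C·(‖U‖_{h¹} + ‖U‖_{ℓ²})·‖U‖_{ℓ²}³`. -/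
theorem stmt11 :
    ∃ C : ℝ, 0 < C ∧
      ∀ K : ℕ, 2 ≤ K → Even K →
        ∀ U : ℤ → ℂ, (∀ j : ℤ, U (j + K) = U j) →
          (2 * Real.pi / K) * ∑ k ∈ BK K, ‖U k‖ ^ 4 ≤
            C * (h1normK K U + l2normK K U) * l2normK K U ^ 3 := by
  refine ⟨2, two_pos, fun K hK hKe U hU ↦ ?_⟩
  have hHL := h1normK_mul_l2normK (by omega : K ≠ 0) U
  have hquartic := Function.Periodic.sum_norm_pow_four_le (K := K) hU (-((K : ℤ) / 2))
  rw [← BK_eq_Ico hKe, mul_assoc 2, ← hHL] at hquartic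
  have hL := l2normK_sq K U
  set S := ∑ k ∈ BK K, ‖U k‖ ^ 2
  set H := h1normK K U
  set L := l2normK K U
  have hH : 0 ≤ H := Real.sqrt_nonneg _
  have hL0 : 0 ≤ L := Real.sqrt_nonneg _
  have hSK : S / K ≤ L ^ 2 := by
    rw [hL, div_eq_inv_mul, ← one_div]
    gcongr
    linarith [Real.pi_gt_three]
  calc 2 * Real.pi / K * ∑ k ∈ BK K, ‖U k‖ ^ 4
      ≤ 2 * Real.pi / K * ((S / K + 2 * (H * L)) * S) :=
        mul_le_mul_of_nonneg_left hquartic (by positivity)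
    _ = (S / K + 2 * H * L) * L ^ 2 := by rw [hL]; ring
    _ ≤ (L ^ 2 + 2 * H * L) * L ^ 2 := by gcongr
    _ ≤ 2 * (H + L) * L ^ 3 := by nlinarith [pow_nonneg hL0 4, mul_nonneg hH (pow_nonneg hL0 3)]
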